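/- arXiv:2412.16175 — 2 statements merged into one kernel-verified Lean document; each statement's English description precedes it below -/
import Mathlib

section
/- Let A, B, w, x₀ ∈ ℝ and T > 0. Suppose g(t) = w + (x₀−w)e^{−At} and k : [0,T] → ℝ satisfies k′(t) = (−2A + B)k(t) + 2w(A − B)g(t) + w²B with k(0) = x₀². Then k(t) − g(t)² = (x₀ − w)²e^{−2At}(e^{Bt} − 1) for all t ∈ [0,T]. In particular, if B ≥ 0 then k(t) ≥ g(t)² for all t. -/
theorem second_moment_ode_variance (A B w x₀ T : ℝ) (hT : 0 < T)
    (g k : ℝ → ℝ)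
    (hg : ∀ t, g t = w + (x₀ - w) * Real.exp (-A * t))
    (hk : ∀ t ∈ Set.Icc (0 : ℝ) T,
        HasDerivAt k ((-2 * A + B) * k t + 2 * w * (A - B) * g t + w ^ 2 * B) t)
    (hk0 : k 0 = x₀ ^ 2) :
    (∀ t ∈ Set.Icc (0 : ℝ) T,
        k t - (g t) ^ 2 = (x₀ - w) ^ 2 * Real.exp (-2 * A * t) * (Real.exp (B * t) - 1)) ∧
    (0 ≤ B → ∀ t ∈ Set.Icc (0 : ℝ) T, (g t) ^ 2 ≤ k t) := by
  set K : ℝ → ℝ := fun t => w^2 + 2*w*(x₀-w)*Real.exp (-A*t)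
      + (x₀-w)^2 * Real.exp ((B-2*A)*t) with hKdef
  have hKderiv : ∀ t : ℝ,
      HasDerivAt K ((-2*A+B) * K t + 2*w*(A-B)*g t + w^2*B) t := by
    intro t
    have h1 : HasDerivAt (fun s => Real.exp (-A*s)) (Real.exp (-A*t) * (-A)) t := by
      have := ((hasDerivAt_id t).const_mul (-A)).exp
      simpa using this
    have h2 : HasDerivAt (fun s => Real.exp ((B-2*A)*s))
        (Real.exp ((B-2*A)*t) * (B-2*A)) t := by
      have := ((hasDerivAt_id t).const_mul (B-2*A)).exp
      simpa using this
    have h3 := ((h1.const_mul (2*w*(x₀-w))).add (h2.const_mul ((x₀-w)^2))).const_add (w^2)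
    convert h3 using 1
    · rfl
    · rfl
    · funext x; simp only [hKdef, Pi.add_apply]; ring
    · rw [hg t]; simp only [hKdef]; ring
  have hd : ∀ t ∈ Set.Icc (0:ℝ) T,
      HasDerivAt (fun s => (k s - K s) * Real.exp (-(-2*A+B)*s)) 0 t := by
    intro t ht
    have h3 : HasDerivAt (fun s => Real.exp (-(-2*A+B)*s))
        (Real.exp (-(-2*A+B)*t) * (-(-2*A+B))) t := by
      have := ((hasDerivAt_id t).const_mul (-(-2*A+B))).exp
      simpa using this
    have h4 := ((hk t ht).sub (hKderiv t)).mul h3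
    convert h4 using 1
    · rfl
    · rfl
    · funext s; simp only [Pi.mul_apply, Pi.sub_apply]
    rw [Pi.sub_apply]
    ring
  have key : ∀ t ∈ Set.Icc (0:ℝ) T, k t = K t := by
    intro t ht
    have hcont : ContinuousOn (fun s => (k s - K s) * Real.exp (-(-2*A+B)*s))
        (Set.Icc 0 T) := fun s hs => ((hd s hs).continuousAt.continuousWithinAt)
    have hconst := constant_of_has_deriv_right_zero hcont
      (fun s hs => ((hd s (Set.mem_Icc_of_Ico hs)).hasDerivWithinAt)) t ht
    have h0 : k 0 - K 0 = 0 := by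
      simp only [hKdef, hk0, mul_zero, Real.exp_zero]
      ring
    rw [h0, zero_mul] at hconst
    have hpos : Real.exp (-(-2*A+B)*t) ≠ 0 := (Real.exp_pos _).ne'
    have := mul_eq_zero.mp hconst
    rcases this with h | h
    · linarith
    · exact absurd h hpos
  have main : ∀ t ∈ Set.Icc (0:ℝ) T,
      k t - (g t) ^ 2 = (x₀ - w) ^ 2 * Real.exp (-2 * A * t) * (Real.exp (B * t) - 1) := by
    intro t ht
    rw [key t ht, hg t]
    have e1 : Real.exp (-A*t) * Real.exp (-A*t) = Real.exp (-2*A*t) := by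
      rw [← Real.exp_add]; ring_nf
    have e2 : Real.exp ((B-2*A)*t) = Real.exp (-2*A*t) * Real.exp (B*t) := by
      rw [← Real.exp_add]; ring_nf
    simp only [hKdef, e2]
    nlinarith [e1]
  refine ⟨main, fun hB t ht => ?_⟩
  have h := main t ht
  have hBt : (0:ℝ) ≤ B * t := mul_nonneg hB ht.1
  have h1 : (1:ℝ) ≤ Real.exp (B*t) := by
    calc (1:ℝ) = Real.exp 0 := Real.exp_zero.symm
    _ ≤ Real.exp (B*t) := Real.exp_le_exp.mpr hBt
  have h2 : 0 ≤ (x₀ - w) ^ 2 * Real.exp (-2 * A * t) * (Real.exp (B * t) - 1) :=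
    mul_nonneg (mul_nonneg (sq_nonneg _) (Real.exp_pos _).le) (by linarith)
  linarith
end

section
/- Let μ, r ∈ ℝ^d with μ ≠ r, Σ symmetric positive definite, T > 0, and SR(φ₁) = (e^{(μ−r)ᵀφ₁·T} − 1)/√(e^{φ₁ᵀΣφ₁·T} − 1) for φ₁ ≠ 0. Then SR is uniformly bounded: there exists a constant C₁ > 0 (depending only on μ, r, Σ, T) such that |SR(φ₁)| ≤ C₁ for all φ₁ ∈ ℝ^d \ {0}. -/
open Matrix

private lemma abs_exp_sub_one_le' (x : ℝ) : |Real.exp x - 1| ≤ Real.exp |x| - 1 := by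
  have h1 : Real.exp x ≤ Real.exp |x| := Real.exp_le_exp.mpr (le_abs_self x)
  have h2 : Real.exp (-|x|) ≤ Real.exp x := Real.exp_le_exp.mpr (neg_abs_le x)
  have h3 : Real.exp (-|x|) = (Real.exp |x|)⁻¹ := Real.exp_neg |x|
  have h4 : 1 ≤ Real.exp |x| := Real.one_le_exp (abs_nonneg x)
  rw [abs_le]
  constructor
  · rw [h3] at h2
    have h5 : Real.exp |x| * (Real.exp |x|)⁻¹ = 1 := mul_inv_cancel₀ (by positivity)
    nlinarith [Real.exp_pos |x|]
  · linarith

private lemma sr_key (c : ℝ) (hc : 0 ≤ c) (x y : ℝ) (hy : 0 < y)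
    (hxy : |x| ≤ c * Real.sqrt y) :
    |Real.exp x - 1| ≤
      (c * Real.exp c + Real.sqrt 2 * Real.exp (c^2) + 1) * Real.sqrt (Real.exp y - 1) := by
  have hsy : 0 < Real.sqrt y := Real.sqrt_pos.mpr hy
  have hey : 0 < Real.exp y - 1 := by linarith [Real.add_one_le_exp y]
  have hsey : 0 < Real.sqrt (Real.exp y - 1) := Real.sqrt_pos.mpr hey
  have h1 : |Real.exp x - 1| ≤ Real.exp (c * Real.sqrt y) - 1 := by
    refine (abs_exp_sub_one_le' x).trans ?_
    have := Real.exp_le_exp.mpr hxy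
    linarith
  refine h1.trans ?_
  set t := c * Real.sqrt y with ht
  have hty : Real.sqrt y ≤ Real.sqrt (Real.exp y - 1) := by
    apply Real.sqrt_le_sqrt; linarith [Real.add_one_le_exp y]
  have htnn : 0 ≤ t := by positivity
  rcases le_or_gt y 1 with hy1 | hy1
  · have htc : t ≤ c := by
      have : Real.sqrt y ≤ 1 := by
        rw [show (1:ℝ) = Real.sqrt 1 by simp]
        exact Real.sqrt_le_sqrt hy1
      nlinarith
    have hexp : Real.exp t - 1 ≤ t * Real.exp t := by
      have ha := Real.add_one_le_exp (-t)
      have hb : Real.exp (-t) = (Real.exp t)⁻¹ := Real.exp_neg t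
      have hpos : (0:ℝ) < Real.exp t := Real.exp_pos t
      have h5 : Real.exp t * (Real.exp t)⁻¹ = 1 := mul_inv_cancel₀ (by positivity)
      nlinarith
    have hec : Real.exp t ≤ Real.exp c := Real.exp_le_exp.mpr htc
    have h2 : Real.exp t - 1 ≤ c * Real.exp c * Real.sqrt y := by
      have : t * Real.exp t ≤ (c * Real.sqrt y) * Real.exp c := by
        rw [ht]; gcongr
      nlinarith
    have h3 : c * Real.exp c * Real.sqrt y ≤ c * Real.exp c * Real.sqrt (Real.exp y - 1) := by
      gcongr
    have h6 : (0:ℝ) ≤ Real.sqrt 2 * Real.exp (c^2) + 1 := by positivity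
    nlinarith [hsey.le]
  · have ht2 : t ≤ c^2 + y/4 := by
      nlinarith [sq_nonneg (c - Real.sqrt y / 2), Real.sq_sqrt hy.le]
    have hbig : Real.exp y / 2 ≤ Real.exp y - 1 := by
      have h2e : (2:ℝ) ≤ Real.exp 1 := by linarith [Real.exp_one_gt_d9]
      have h4 : Real.exp 1 ≤ Real.exp y := Real.exp_le_exp.mpr hy1.le
      linarith
    have h5 : Real.exp (y/2) / Real.sqrt 2 ≤ Real.sqrt (Real.exp y - 1) := by
      rw [div_le_iff₀ (by positivity), Real.exp_half,
        ← Real.sqrt_mul hey.le 2]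
      apply Real.sqrt_le_sqrt
      linarith
    have h6 : Real.exp t ≤ Real.exp (c^2) * Real.exp (y/2) := by
      rw [← Real.exp_add]
      apply Real.exp_le_exp.mpr
      linarith
    have h7 : Real.exp (c^2) * Real.exp (y/2) ≤
        Real.exp (c^2) * (Real.sqrt 2 * Real.sqrt (Real.exp y - 1)) := by
      gcongr
      have hs2 : (0:ℝ) < Real.sqrt 2 := by positivity
      rw [div_le_iff₀ hs2] at h5
      linarith
    have h8 : (0:ℝ) ≤ c * Real.exp c := by positivity
    nlinarith [hsey.le]

private lemma posdef_lower_bound {d : ℕ} (hd : 0 < d) (S : Matrix (Fin d) (Fin d) ℝ)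
    (hS : S.PosDef) :
    ∃ m > (0:ℝ), ∀ φ : Fin d → ℝ, m * ‖φ‖^2 ≤ φ ⬝ᵥ S *ᵥ φ := by
  haveI : Nonempty (Fin d) := ⟨⟨0, hd⟩⟩
  have hq : Continuous fun x : Fin d → ℝ => x ⬝ᵥ S *ᵥ x := by
    simp only [dotProduct, mulVec]
    fun_prop
  obtain ⟨u, hu, hmin⟩ := (isCompact_sphere (0 : Fin d → ℝ) 1).exists_isMinOn
    (NormedSpace.sphere_nonempty.mpr zero_le_one) hq.continuousOn
  have hu1 : ‖u‖ = 1 := by simpa using mem_sphere_zero_iff_norm.mp hu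
  have hune : u ≠ 0 := by intro h; rw [h] at hu1; simp at hu1
  have hm : 0 < u ⬝ᵥ S *ᵥ u := by simpa using hS.dotProduct_mulVec_pos hune
  refine ⟨u ⬝ᵥ S *ᵥ u, hm, fun φ => ?_⟩
  rcases eq_or_ne φ 0 with rfl | hφ
  · simp
  · have hn : (0:ℝ) < ‖φ‖ := norm_pos_iff.mpr hφ
    set v : Fin d → ℝ := ‖φ‖⁻¹ • φ with hv
    have hvs : v ∈ Metric.sphere (0 : Fin d → ℝ) 1 := by
      simp [hv, norm_smul, abs_of_pos (inv_pos.mpr hn), inv_mul_cancel₀ hn.ne']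
    have h1 : u ⬝ᵥ S *ᵥ u ≤ v ⬝ᵥ S *ᵥ v := hmin hvs
    have h2 : v ⬝ᵥ S *ᵥ v = ‖φ‖⁻¹^2 * (φ ⬝ᵥ S *ᵥ φ) := by
      rw [hv, smul_dotProduct, mulVec_smul, dotProduct_smul]
      simp [smul_eq_mul]; ring
    rw [h2] at h1
    have := mul_le_mul_of_nonneg_left h1 (by positivity : (0:ℝ) ≤ ‖φ‖^2)
    calc (u ⬝ᵥ S *ᵥ u) * ‖φ‖^2 = ‖φ‖^2 * (u ⬝ᵥ S *ᵥ u) := by ring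
      _ ≤ ‖φ‖^2 * (‖φ‖⁻¹^2 * (φ ⬝ᵥ S *ᵥ φ)) := this
      _ = φ ⬝ᵥ S *ᵥ φ := by field_simp

private lemma dot_cauchy {d : ℕ} (a φ : Fin d → ℝ) :
    |a ⬝ᵥ φ| ≤ Real.sqrt (a ⬝ᵥ a) * Real.sqrt ((d:ℝ)) * ‖φ‖ := by
  have cs := Finset.sum_mul_sq_le_sq_mul_sq Finset.univ a φ
  have h1 : (a ⬝ᵥ φ)^2 ≤ (a ⬝ᵥ a) * (φ ⬝ᵥ φ) := by
    simpa [dotProduct, sq] using cs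
  have h2 : φ ⬝ᵥ φ ≤ (d:ℝ) * ‖φ‖^2 := by
    rw [dotProduct]
    calc ∑ i, φ i * φ i ≤ ∑ _i : Fin d, ‖φ‖^2 := by
          apply Finset.sum_le_sum
          intro i _
          have := norm_le_pi_norm φ i
          have h3 : |φ i| ≤ ‖φ‖ := by simpa using this
          nlinarith [abs_nonneg (φ i), le_abs_self (φ i), neg_abs_le (φ i)]
      _ = (d:ℝ) * ‖φ‖^2 := by simp [Finset.sum_const, mul_comm]
  have haa : 0 ≤ a ⬝ᵥ a := Finset.sum_nonneg fun i _ => mul_self_nonneg _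
  have h4 : (a ⬝ᵥ φ)^2 ≤ (a ⬝ᵥ a) * ((d:ℝ) * ‖φ‖^2) := by nlinarith
  calc |a ⬝ᵥ φ| = Real.sqrt ((a ⬝ᵥ φ)^2) := (Real.sqrt_sq_eq_abs _).symm
    _ ≤ Real.sqrt ((a ⬝ᵥ a) * ((d:ℝ) * ‖φ‖^2)) := Real.sqrt_le_sqrt h4
    _ = Real.sqrt (a ⬝ᵥ a) * Real.sqrt ((d:ℝ)) * ‖φ‖ := by
        rw [Real.sqrt_mul haa, Real.sqrt_mul (Nat.cast_nonneg d), Real.sqrt_sq (norm_nonneg φ)]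
        ring

theorem sharpe_ratio_uniformly_bounded {d : ℕ}
    (μ r : Fin d → ℝ) (hμr : μ ≠ r)
    (S : Matrix (Fin d) (Fin d) ℝ) (hS : S.PosDef)
    (T : ℝ) (hT : 0 < T) :
    ∃ C₁ > (0 : ℝ), ∀ φ₁ : Fin d → ℝ, φ₁ ≠ 0 →
      |(Real.exp (((μ - r) ⬝ᵥ φ₁) * T) - 1) /
          Real.sqrt (Real.exp ((φ₁ ⬝ᵥ S *ᵥ φ₁) * T) - 1)| ≤ C₁ := by
  rcases Nat.eq_zero_or_pos d with rfl | hd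
  · refine ⟨1, one_pos, fun φ₁ hφ => ?_⟩
    exact absurd (funext fun i => i.elim0) hφ
  obtain ⟨m, hm, hmle⟩ := posdef_lower_bound hd S hS
  set a : Fin d → ℝ := μ - r with ha
  set A : ℝ := Real.sqrt (a ⬝ᵥ a) * Real.sqrt ((d:ℝ)) with hA
  set c : ℝ := A * T / Real.sqrt (m * T) with hc
  have hAnn : 0 ≤ A := by positivity
  have hmT : (0:ℝ) < Real.sqrt (m * T) := Real.sqrt_pos.mpr (by positivity)
  have hcnn : 0 ≤ c := by positivity
  refine ⟨c * Real.exp c + Real.sqrt 2 * Real.exp (c^2) + 1, by positivity, fun φ hφ => ?_⟩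
  set x : ℝ := (a ⬝ᵥ φ) * T with hx
  set y : ℝ := (φ ⬝ᵥ S *ᵥ φ) * T with hy
  have hqpos : 0 < φ ⬝ᵥ S *ᵥ φ := by simpa using hS.dotProduct_mulVec_pos hφ
  have hypos : 0 < y := by positivity
  have hnφ : (0:ℝ) < ‖φ‖ := norm_pos_iff.mpr hφ
  -- ‖φ‖ ≤ √y / √(mT)
  have hb1 : m * T * ‖φ‖^2 ≤ y := by
    rw [hy]
    have := hmle φ
    nlinarith
  have hb2 : Real.sqrt (m * T) * ‖φ‖ ≤ Real.sqrt y := by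
    have : Real.sqrt (m * T * ‖φ‖^2) ≤ Real.sqrt y := Real.sqrt_le_sqrt hb1
    rwa [Real.sqrt_mul (by positivity), Real.sqrt_sq (norm_nonneg φ)] at this
  have hxb : |x| ≤ c * Real.sqrt y := by
    have h1 : |x| ≤ A * ‖φ‖ * T := by
      rw [hx, abs_mul, abs_of_pos hT]
      have h' := mul_le_mul_of_nonneg_right (dot_cauchy a φ) hT.le
      rw [← hA] at h'
      linarith
    have h2 : ‖φ‖ ≤ Real.sqrt y / Real.sqrt (m * T) := by
      rw [le_div_iff₀ hmT]
      linarith [hb2]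
    calc |x| ≤ A * ‖φ‖ * T := h1
      _ ≤ A * (Real.sqrt y / Real.sqrt (m * T)) * T := by gcongr
      _ = c * Real.sqrt y := by rw [hc]; field_simp
  have hkey := sr_key c hcnn x y hypos hxb
  have hey : 0 < Real.exp y - 1 := by linarith [Real.add_one_le_exp y]
  have hsey : 0 < Real.sqrt (Real.exp y - 1) := Real.sqrt_pos.mpr hey
  rw [abs_div, abs_of_pos hsey, div_le_iff₀ hsey]
  exact hkey
end
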